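/- arXiv:1904.10302 — 4 statements merged into one kernel-verified Lean document; each statement's English description precedes it below -/
import Mathlib

section
/- In a residuated lattice A, for any filter F, the coannihilator F^⊥ = {a ∈ A | a ∨ x = 1 for all x ∈ F} is the pseudocomplement of F in the lattice of filters; that is, F ∩ F^⊥ = {1}, and any filter G with F ∩ G = {1} satisfies G ⊆ F^⊥. -/
/-- A (bounded, integral, commutative) residuated lattice. -/
class ResLattice (A : Type*) extends Lattice A, CommMonoid A, OrderBot A where
  himp : A → A → A
  adjunction : ∀ x y z : A, x * y ≤ z ↔ x ≤ himp y z
  le_one : ∀ x : A, x ≤ 1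

variable {A : Type*} [ResLattice A]

/-- Coannihilator of a subset: `X^⊥ = {a | a ⊔ x = 1 for all x ∈ X}`. -/
def Coann (X : Set A) : Set A := {a | ∀ x ∈ X, a ⊔ x = 1}

/-- Coannulet of an element: `x^⊥`. -/
def rperp (x : A) : Set A := Coann {x}

/-- The principal filter generated by `x`. -/
def PFil (x : A) : Set A := {a | ∃ n : ℕ, 0 < n ∧ x ^ n ≤ a}

/-- Filters of a residuated lattice. -/
def IsRLFilter (F : Set A) : Prop :=
  F.Nonempty ∧ (∀ x ∈ F, ∀ y ∈ F, x * y ∈ F) ∧ (∀ x ∈ F, ∀ y : A, x ⊔ y ∈ F)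

/-- Prime filters. -/
def IsRLPrime (P : Set A) : Prop :=
  IsRLFilter P ∧ P ≠ Set.univ ∧ ∀ x y : A, x ⊔ y ∈ P → x ∈ P ∨ y ∈ P

/-- Minimal prime filters. -/
def IsRLMinPrime (P : Set A) : Prop :=
  IsRLPrime P ∧ ∀ Q : Set A, IsRLPrime Q → Q ⊆ P → Q = P

/-- Quasicomplemented residuated lattice. -/
def Quasicomplemented (A : Type*) [ResLattice A] : Prop :=
  ∀ x : A, ∃ y : A, Coann (rperp x) = rperp y

/-- α-filters. -/
def IsAlphaFilter (F : Set A) : Prop :=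
  IsRLFilter F ∧ ∀ x ∈ F, Coann (rperp x) ⊆ F

/-- The α-filter generated by a subset. -/
def alphaGen (X : Set A) : Set A := ⋂₀ {G : Set A | IsAlphaFilter G ∧ X ⊆ G}

theorem IsRLFilter.sup_mem {F : Set A} (hF : IsRLFilter F) {x : A} (hx : x ∈ F) (y : A) :
    x ⊔ y ∈ F :=
  hF.2.2 x hx y

theorem IsRLFilter.one_mem {F : Set A} (hF : IsRLFilter F) : (1 : A) ∈ F := by
  obtain ⟨x, hx⟩ := hF.1
  simpa [sup_eq_right.mpr (ResLattice.le_one x)] using hF.sup_mem hx 1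

theorem one_mem_coann (X : Set A) : (1 : A) ∈ Coann X :=
  fun x _ => sup_eq_left.mpr (ResLattice.le_one x)

theorem eq_one_of_mem_inter_coann {X : Set A} {a : A} (ha : a ∈ X ∩ Coann X) : a = 1 := by
  simpa using ha.2 a ha.1

theorem IsRLFilter.inter_coann_eq_singleton_one {F : Set A} (hF : IsRLFilter F) :
    F ∩ Coann F = {1} :=
  Set.eq_singleton_iff_unique_mem.mpr
    ⟨⟨hF.one_mem, one_mem_coann F⟩, fun _ => eq_one_of_mem_inter_coann⟩

theorem IsRLFilter.subset_coann_of_inter_subset {F G : Set A} (hF : IsRLFilter F)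
    (hG : IsRLFilter G) (hFG : F ∩ G ⊆ {1}) : G ⊆ Coann F := by
  intro g hg x hx
  exact hFG ⟨sup_comm x g ▸ hF.sup_mem hx g, hG.sup_mem hg x⟩

theorem stmt0 (F : Set A) (hF : IsRLFilter F) :
    F ∩ Coann F = {1} ∧ ∀ G : Set A, IsRLFilter G → F ∩ G = {1} → G ⊆ Coann F :=
  ⟨hF.inter_coann_eq_singleton_one,
    fun _ hG hFG => hF.subset_coann_of_inter_subset hG hFG.subset⟩
end

section
/- In a residuated lattice, any non-dense prime filter P (i.e., P^⊥ ≠ {1}) is a coannulet: there exists x ∈ A with P = x^⊥. -/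
variable {A : Type*} [ResLattice A]

theorem exists_mem_coann_ne_one {X : Set A} (h : Coann X ≠ {1}) : ∃ x ∈ Coann X, x ≠ 1 := by
  by_contra! hall
  exact h (Set.eq_singleton_iff_unique_mem.mpr ⟨one_mem_coann X, hall⟩)

theorem eq_one_of_mem_coann_of_mem {X : Set A} {x : A} (hx : x ∈ Coann X) (hxX : x ∈ X) :
    x = 1 := by
  simpa using hx x hxX

theorem subset_rperp_of_mem_coann {X : Set A} {x : A} (hx : x ∈ Coann X) : X ⊆ rperp x := by
  rintro a ha _ rfl
  rw [sup_comm]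
  exact hx a ha

theorem IsRLPrime.rperp_subset {P : Set A} (hP : IsRLPrime P) {x : A} (hx : x ∉ P) :
    rperp x ⊆ P := by
  intro a ha
  have hax : a ⊔ x ∈ P := (ha x rfl).symm ▸ hP.1.one_mem
  exact (hP.2.2 a x hax).resolve_right hx

theorem stmt1 (P : Set A) (hP : IsRLPrime P) (hnd : Coann P ≠ {1}) :
    ∃ x : A, P = rperp x := by
  obtain ⟨x, hx, hx1⟩ := exists_mem_coann_ne_one hnd
  have hxP : x ∉ P := fun h => hx1 (eq_one_of_mem_coann_of_mem hx h)
  exact ⟨x, (subset_rperp_of_mem_coann hx).antisymm (hP.rperp_subset hxP)⟩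
end

section
/- A residuated lattice A is quasicomplemented (for every x there is y with x^⊥⊥ = y^⊥) if and only if for any x ∈ A there exists y ∈ A such that x ⊙ y is dense (i.e., (x⊙y)^⊥ = {1}) and x ∨ y = 1. -/
variable {A : Type*} [ResLattice A]

namespace ResLattice

theorem mul_le_mul_right_of_le {a b : A} (h : a ≤ b) (c : A) : a * c ≤ b * c :=
  (adjunction a c _).2 (h.trans ((adjunction b c _).1 le_rfl))

theorem mul_le_left (a b : A) : a * b ≤ a := by
  simpa [mul_comm] using mul_le_mul_right_of_le (le_one b) a

theorem mul_le_right (a b : A) : a * b ≤ b :=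
  mul_comm a b ▸ mul_le_left b a

theorem sup_mul_le_iff {a b c d : A} : (a ⊔ b) * c ≤ d ↔ a * c ≤ d ∧ b * c ≤ d := by
  simp only [adjunction, sup_le_iff]

theorem sup_mul_sup_le (a x y : A) : (a ⊔ x) * (a ⊔ y) ≤ a ⊔ x * y := by
  refine sup_mul_le_iff.2 ⟨le_sup_of_le_left (mul_le_left a _), ?_⟩
  rw [mul_comm, sup_mul_le_iff]
  exact ⟨le_sup_of_le_left (mul_le_left a x), le_sup_of_le_right (mul_comm y x).le⟩

theorem sup_mul_eq_one {a x y : A} (hx : a ⊔ x = 1) (hy : a ⊔ y = 1) : a ⊔ x * y = 1 :=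
  (le_one _).antisymm (by simpa [hx, hy] using sup_mul_sup_le a x y)

theorem sup_eq_one_of_le {a b c : A} (h : a ⊔ b = 1) (hbc : b ≤ c) : a ⊔ c = 1 :=
  (le_one _).antisymm (h ▸ sup_le_sup_left hbc a)

end ResLattice

open ResLattice

theorem mem_rperp {a x : A} : a ∈ rperp x ↔ a ⊔ x = 1 := by
  simp [rperp, Coann]

theorem one_mem_rperp (x : A) : (1 : A) ∈ rperp x :=
  mem_rperp.2 (sup_eq_left.2 (le_one x))

theorem mem_rperp_of_le {a b x : A} (ha : a ∈ rperp x) (hab : a ≤ b) : b ∈ rperp x :=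
  mem_rperp.2 (sup_comm x b ▸ sup_eq_one_of_le (sup_comm a x ▸ mem_rperp.1 ha) hab)

theorem rperp_mono {x y : A} (h : x ≤ y) : rperp x ⊆ rperp y :=
  fun _ ha => mem_rperp.2 (sup_eq_one_of_le (mem_rperp.1 ha) h)

theorem rperp_mul (x y : A) : rperp (x * y) = rperp x ∩ rperp y := by
  refine Set.Subset.antisymm
    (fun a ha => ⟨rperp_mono (mul_le_left x y) ha, rperp_mono (mul_le_right x y) ha⟩) ?_
  rintro a ⟨hx, hy⟩
  exact mem_rperp.2 (sup_mul_eq_one (mem_rperp.1 hx) (mem_rperp.1 hy))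

theorem coann_anti {X Y : Set A} (h : X ⊆ Y) : Coann Y ⊆ Coann X :=
  fun _ ha x hx => ha x (h hx)

theorem self_mem_coann_rperp (x : A) : x ∈ Coann (rperp x) :=
  fun _ hz => sup_comm x _ ▸ mem_rperp.1 hz

theorem inter_coann_self {X : Set A} (h : (1 : A) ∈ X) : X ∩ Coann X = {1} := by
  refine Set.Subset.antisymm (fun a ⟨haX, ha⟩ => by simpa using ha a haX) ?_
  rintro _ rfl
  exact ⟨h, fun x _ => sup_eq_left.2 (le_one x)⟩

theorem coann_rperp_eq_rperp_iff {x y : A} :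
    Coann (rperp x) = rperp y ↔ x ⊔ y = 1 ∧ rperp x ∩ rperp y = {1} := by
  constructor
  · intro h
    exact ⟨mem_rperp.1 (h ▸ self_mem_coann_rperp x), h ▸ inter_coann_self (one_mem_rperp x)⟩
  · rintro ⟨hxy, hdense⟩
    refine Set.Subset.antisymm
      (coann_anti (Set.singleton_subset_iff.2 (mem_rperp.2 (sup_comm x y ▸ hxy)))) ?_
    intro a ha z hz
    have hza : a ⊔ z ∈ rperp x ∩ rperp y :=
      ⟨mem_rperp_of_le hz le_sup_right, mem_rperp_of_le ha le_sup_left⟩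
    rwa [hdense] at hza

theorem stmt2 :
    Quasicomplemented A ↔ ∀ x : A, ∃ y : A, rperp (x * y) = {1} ∧ x ⊔ y = 1 := by
  simp only [Quasicomplemented, coann_rperp_eq_rperp_iff, rperp_mul, and_comm]
end

section
/- If in a residuated lattice every coannulet x^⊥ is a principal filter, then the residuated lattice is quasicomplemented. -/
variable {A : Type*} [ResLattice A]

namespace ResLattice

instance : IsOrderedMonoid A where
  mul_le_mul_left a b hab c :=
    (adjunction a c (b * c)).mpr (hab.trans ((adjunction b c (b * c)).mp le_rfl))

theorem sup_mul (a b c : A) : (a ⊔ b) * c = a * c ⊔ b * c := by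
  refine le_antisymm ((adjunction _ _ _).mpr (sup_le ?_ ?_)) ?_
  · exact (adjunction _ _ _).mp le_sup_left
  · exact (adjunction _ _ _).mp le_sup_right
  · exact sup_le (mul_le_mul_left le_sup_left c) (mul_le_mul_left le_sup_right c)

theorem mul_sup (a b c : A) : a * (b ⊔ c) = a * b ⊔ a * c := by
  simp only [mul_comm a, sup_mul]

theorem sup_mul_eq_one_s3 {a b c : A} (hb : a ⊔ b = 1) (hc : a ⊔ c = 1) : a ⊔ b * c = 1 := by
  refine le_antisymm (le_one _) ?_
  calc (1 : A) = (a ⊔ b) * (a ⊔ c) := by rw [hb, hc, one_mul]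
    _ = a * a ⊔ a * c ⊔ (b * a ⊔ b * c) := by rw [sup_mul, mul_sup, mul_sup]
    _ ≤ a ⊔ b * c :=
      sup_le
        (sup_le ((mul_le_left a a).trans le_sup_left) ((mul_le_left a c).trans le_sup_left))
        (sup_le ((mul_le_right b a).trans le_sup_left) le_sup_right)

theorem sup_pow_eq_one {a b : A} (hb : a ⊔ b = 1) (n : ℕ) : a ⊔ b ^ n = 1 := by
  induction n with
  | zero => exact le_antisymm (le_one _) (pow_zero b ▸ le_sup_right)
  | succ n ih => rw [pow_succ]; exact sup_mul_eq_one_s3 ih hb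

end ResLattice

theorem coann_pFil (y : A) : Coann (PFil y) = rperp y := by
  ext a
  refine ⟨fun ha y' hy' => ?_, fun ha b ⟨n, _, hyn⟩ => ?_⟩
  · rw [Set.mem_singleton_iff.mp hy']
    exact ha y ⟨1, Nat.one_pos, (pow_one y).le⟩
  · exact le_antisymm (ResLattice.le_one _)
      ((ResLattice.sup_pow_eq_one (ha y rfl) n).symm.le.trans (sup_le_sup_left hyn a))

theorem stmt3 (h : ∀ x : A, ∃ y : A, rperp x = PFil y) :
    Quasicomplemented A := by
  intro x
  obtain ⟨y, hy⟩ := h x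
  exact ⟨y, by rw [hy, coann_pFil]⟩
end
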